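/- arXiv:2504.13433 — 2 statements merged into one kernel-verified Lean document; each statement's English description precedes it below -/
import Mathlib

section
/- For every n ≥ 1, the length |P_n| of the pillar sequence P_n is odd. -/
/-- Generation operator: expand a run-length vector `R` starting with symbol `s`,
alternating between `s` and `4 - s` from run to run. -/
def G : List ℕ → ℕ → List ℕ
  | [], _ => []
  | r :: rs, s => List.replicate r s ++ G rs (4 - s)

/-- Pillar sequences: `P 1 = [3]`, `P (n+1) = G (P n) 3` for `n ≥ 1`. -/
def P : ℕ → List ℕ
  | 0 => []
  | 1 => [3]
  | n + 2 => G (P (n + 1)) 3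

/-- Block sequences: `B 1 = G [1,3,3,3,1] 1`, `B (n+1) = B n ++ P n ++ B n` for `n ≥ 1`. -/
def B : ℕ → List ℕ
  | 0 => []
  | 1 => G [1, 3, 3, 3, 1] 1
  | n + 2 => B (n + 1) ++ P (n + 1) ++ B (n + 1)

/-!
The length of `G R s` is the sum of the run lengths `R`. Every entry of every `P n` is `1` or `3`,
hence odd, so `|P (n+1)| = ∑ P n ≡ |P n| (mod 2)`, and `|P 1| = 1`.
-/

theorem List.even_sum_iff_even_length {l : List ℕ} (hl : ∀ x ∈ l, Odd x) :
    Even l.sum ↔ Even l.length := by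
  induction l with
  | nil => simp
  | cons a l ih =>
    have ha : ¬Even a := Nat.not_even_iff_odd.mpr (hl a List.mem_cons_self)
    rw [List.sum_cons, List.length_cons, Nat.even_add, Nat.even_add_one,
      ih fun x hx => hl x (List.mem_cons_of_mem a hx)]
    tauto

@[simp]
theorem length_G (R : List ℕ) (s : ℕ) : (G R s).length = R.sum := by
  induction R generalizing s with
  | nil => rfl
  | cons r rs ih => simp [G, ih]

theorem mem_G {R : List ℕ} {s x : ℕ} (hs : s ≤ 4) (hx : x ∈ G R s) : x = s ∨ x = 4 - s := by
  induction R generalizing s with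
  | nil => simp [G] at hx
  | cons r rs ih =>
    simp only [G, List.mem_append, List.mem_replicate] at hx
    rcases hx with ⟨-, rfl⟩ | hx
    · exact Or.inl rfl
    · rcases ih (by omega) hx with h | h <;> omega

theorem mem_P {n x : ℕ} (hx : x ∈ P n) : x = 1 ∨ x = 3 := by
  match n, hx with
  | 1, hx => exact Or.inr (List.mem_singleton.mp hx)
  | n + 2, hx => rcases mem_G (by norm_num) hx with h | h <;> omega

theorem odd_of_mem_P {n x : ℕ} (hx : x ∈ P n) : Odd x := by
  rcases mem_P hx with rfl | rfl <;> decide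

theorem length_P_succ {n : ℕ} (hn : 1 ≤ n) : (P (n + 1)).length = (P n).sum := by
  obtain ⟨k, rfl⟩ := Nat.exists_eq_add_of_le' hn
  exact length_G _ _

/-- For every `n ≥ 1`, the length of the pillar sequence `P n` is odd. -/
theorem pillar_length_odd : ∀ n : ℕ, 1 ≤ n → Odd (P n).length := by
  intro n hn
  induction n, hn using Nat.le_induction with
  | base => decide
  | succ n hn ih =>
    rw [length_P_succ hn, ← Nat.not_even_iff_odd,
      List.even_sum_iff_even_length fun _ => odd_of_mem_P]
    exact Nat.not_even_iff_odd.mpr ih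
end

section
/- Suppose the block densities d_n = c_n/L_n converge to a real limit d with d ≠ 1/2. Then the pillar densities δ_n = o_n/m_n also converge, and their limit equals d. -/
/-!
The pillar `P (n + 1) = G (P n) 3` is determined by the numbers of `1`s and `3`s at even and at
odd positions of `P n`: all runs have odd length, so the `i`-th run of `G R 3` starts at a
position of the parity of `i`. These four counts obey a linear recurrence whose dominant root is
the real root `ρ ∈ (2, 9/4)` of `x ^ 3 = 2 x ^ 2 + 1`, the two other roots having modulus `< 1`;
hence `o n ~ α ρ ^ n`, `m n ~ β ρ ^ n` and `δ n → α / β`. Since `c (n + 1) = 2 c n + o n`,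
`L (n + 1) = 2 L n + m n` and `2 < ρ`, also `c n ~ α ρ ^ n / (ρ - 2)` and
`L n ~ β ρ ^ n / (ρ - 2)`, so `d n → α / β` as well.
-/

open Filter Topology

/-- `parityCount v true l` counts the `v`s at the even positions of `l`, `parityCount v false l`
those at the odd positions. -/
def parityCount (v : ℕ) : Bool → List ℕ → ℕ
  | _, [] => 0
  | b, a :: l => (if a = v ∧ b then 1 else 0) + parityCount v (!b) l

theorem count_eq_parityCount_add (v : ℕ) :
    ∀ (b : Bool) (l : List ℕ), l.count v = parityCount v b l + parityCount v (!b) l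
  | _, [] => rfl
  | b, a :: l => by
    have := count_eq_parityCount_add v (!b) l
    cases b <;> by_cases ha : a = v <;> simp_all [parityCount] <;> omega

theorem length_eq_count_one_add_count_three : ∀ {l : List ℕ}, l ⊆ [1, 3] →
    l.length = l.count 1 + l.count 3
  | [], _ => rfl
  | a :: l, h => by
    have := length_eq_count_one_add_count_three (List.subset_of_cons_subset h)
    rcases List.mem_pair.1 (h List.mem_cons_self) with rfl | rfl <;>
      simp [this] <;> omega

theorem G_subset_one_three : ∀ (R : List ℕ) {s : ℕ}, s ∈ [1, 3] → G R s ⊆ [1, 3]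
  | [], _, _ => List.nil_subset _
  | r :: rs, s, hs => by
    have hs' : 4 - s ∈ [1, 3] := by rcases List.mem_pair.1 hs with rfl | rfl <;> simp
    intro x hx
    rcases List.mem_append.1 hx with hx | hx
    · rwa [List.eq_of_mem_replicate hx]
    · exact G_subset_one_three rs hs' hx

theorem P_subset_one_three : ∀ n, P n ⊆ [1, 3]
  | 0 => List.nil_subset _
  | 1 => by simp [P]
  | _ + 2 => G_subset_one_three _ (by simp)

theorem parityCount_G_three : ∀ {R : List ℕ}, R ⊆ [1, 3] →
    parityCount 3 true (G R 3) = parityCount 1 true R + 2 * parityCount 3 true R ∧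
    parityCount 3 false (G R 3) = parityCount 3 true R ∧
    parityCount 1 true (G R 3) = parityCount 3 false R ∧
    parityCount 1 false (G R 3) = parityCount 1 false R + 2 * parityCount 3 false R
  | [], _ => by simp [G, parityCount]
  | [r], h => by
    rcases List.mem_pair.1 (h List.mem_cons_self) with rfl | rfl <;>
      simp [G, parityCount, List.replicate]
  | r₁ :: r₂ :: rs, h => by
    obtain ⟨i₁, i₂, i₃, i₄⟩ := parityCount_G_three (List.subset_of_cons_subset
      (List.subset_of_cons_subset h))
    have hG : G (r₁ :: r₂ :: rs) 3 =
        List.replicate r₁ 3 ++ List.replicate r₂ 1 ++ G rs 3 := by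
      simp [G]
    rcases List.mem_pair.1 (h List.mem_cons_self) with rfl | rfl <;>
    rcases List.mem_pair.1 (h (List.mem_cons_of_mem _ List.mem_cons_self)) with rfl | rfl <;>
      simp [hG, List.replicate, parityCount, i₁, i₂, i₃, i₄] <;> omega

theorem abs_le_of_two_step_rec {v : ℕ → ℝ} {p q M : ℝ} (hpq : |p| + |q| ≤ 1)
    (hv : ∀ n, v (n + 2) = p * v (n + 1) + q * v n) (h0 : |v 0| ≤ M) (h1 : |v 1| ≤ M) :
    ∀ n, |v n| ≤ M := by
  have hM : 0 ≤ M := (abs_nonneg _).trans h0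
  suffices h : ∀ n, |v n| ≤ M ∧ |v (n + 1)| ≤ M from fun n => (h n).1
  intro n
  induction n with
  | zero => exact ⟨h0, h1⟩
  | succ n ih =>
    refine ⟨ih.2, ?_⟩
    calc |v (n + 2)| ≤ |p| * |v (n + 1)| + |q| * |v n| := by
          rw [hv, ← abs_mul, ← abs_mul]; exact abs_add_le _ _
      _ ≤ |p| * M + |q| * M := by gcongr; exacts [ih.2, ih.1]
      _ ≤ M := by nlinarith

theorem exists_tendsto_div_pow_of_abs_sub_mul_le {u : ℕ → ℝ} {ρ M : ℝ} (hρ : 1 < ρ)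
    (hu : ∀ n, |u (n + 1) - ρ * u n| ≤ M) :
    ∃ a, Tendsto (fun n => u n / ρ ^ n) atTop (𝓝 a) ∧ |u 0 - a| ≤ M / (ρ - 1) := by
  have hρ0 : 0 < ρ := by linarith
  have hstep : ∀ n, dist (u n / ρ ^ n) (u (n + 1) / ρ ^ (n + 1)) ≤ M / ρ * (1 / ρ) ^ n := by
    intro n
    have hpow : 0 < ρ ^ (n + 1) := by positivity
    have hdiff : u (n + 1) / ρ ^ (n + 1) - u n / ρ ^ n =
        (u (n + 1) - ρ * u n) / ρ ^ (n + 1) := by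
      field_simp; ring
    rw [dist_comm, Real.dist_eq, hdiff, abs_div, abs_of_pos hpow, div_le_iff₀ hpow]
    calc |u (n + 1) - ρ * u n| ≤ M := hu n
      _ = M / ρ * (1 / ρ) ^ n * ρ ^ (n + 1) := by rw [one_div, inv_pow, pow_succ]; field_simp
  have hr : 1 / ρ < 1 := (div_lt_one hρ0).2 hρ
  obtain ⟨a, ha⟩ := cauchySeq_tendsto_of_complete (cauchySeq_of_le_geometric _ _ hr hstep)
  refine ⟨a, ha, ?_⟩
  have := dist_le_of_le_geometric_of_tendsto₀ _ _ hr hstep ha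
  rw [Real.dist_eq] at this
  convert this using 1
  · simp
  · field_simp

theorem tendsto_zero_of_le_mul_add {y h : ℕ → ℝ} {r : ℝ} (hr0 : 0 ≤ r) (hr1 : r < 1)
    (hy0 : ∀ n, 0 ≤ y n) (hy : ∀ n, y (n + 1) ≤ r * y n + h n)
    (hh : Tendsto h atTop (𝓝 0)) : Tendsto y atTop (𝓝 0) := by
  refine tendsto_order.2 ⟨fun a ha => .of_forall fun n => ha.trans_le (hy0 n), fun ε hε => ?_⟩
  obtain ⟨N, hN⟩ := eventually_atTop.1
    (hh.eventually (ge_mem_nhds (by nlinarith : (0 : ℝ) < (1 - r) * (ε / 2))))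
  -- past `N`, the excess of `y` over `ε / 2` contracts by the factor `r`
  have hcontract : ∀ k, y (N + k) - ε / 2 ≤ r ^ k * (y N - ε / 2) := by
    intro k
    induction k with
    | zero => simp
    | succ k ih =>
      calc y (N + k + 1) - ε / 2 ≤ r * (y (N + k) - ε / 2) := by
            linarith [hy (N + k), hN (N + k) (Nat.le_add_right N k)]
        _ ≤ r * (r ^ k * (y N - ε / 2)) := by gcongr
        _ = r ^ (k + 1) * (y N - ε / 2) := by ring
  have hgeom : Tendsto (fun k => r ^ k * (y N - ε / 2)) atTop (𝓝 0) := by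
    simpa using (tendsto_pow_atTop_nhds_zero_of_lt_one hr0 hr1).mul_const (y N - ε / 2)
  obtain ⟨K, hK⟩ := eventually_atTop.1 (hgeom.eventually (gt_mem_nhds (half_pos hε)))
  refine eventually_atTop.2 ⟨N + K, fun n hn => ?_⟩
  obtain ⟨k, rfl⟩ := Nat.exists_eq_add_of_le (le_of_add_le_left hn)
  linarith [hcontract k, hK k (by omega)]

theorem tendsto_of_affine_rec {x g : ℕ → ℝ} {r a : ℝ} (hr0 : 0 ≤ r) (hr1 : r < 1)
    (hx : ∀ n, x (n + 1) = r * x n + g n) (hg : Tendsto g atTop (𝓝 a)) :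
    Tendsto x atTop (𝓝 (a / (1 - r))) := by
  have hfix : a / (1 - r) = r * (a / (1 - r)) + a := by
    field_simp [(sub_pos.2 hr1).ne']; ring
  rw [tendsto_iff_dist_tendsto_zero] at hg ⊢
  refine tendsto_zero_of_le_mul_add hr0 hr1 (fun _ => dist_nonneg) (fun n => ?_) hg
  calc dist (x (n + 1)) (a / (1 - r)) = |r * (x n - a / (1 - r)) + (g n - a)| := by
        rw [Real.dist_eq, hx n]; congr 1; linarith
    _ ≤ r * dist (x n) (a / (1 - r)) + dist (g n) a := by
        rw [Real.dist_eq, Real.dist_eq, ← abs_of_nonneg hr0, ← abs_mul, abs_of_nonneg hr0]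
        exact abs_add_le _ _

theorem tendsto_div_pow_of_affine_rec {x y : ℕ → ℝ} {k ρ a : ℝ} (hk : 0 ≤ k)
    (hkρ : k < ρ) (hx : ∀ n, x (n + 1) = k * x n + y n)
    (hy : Tendsto (fun n => y n / ρ ^ n) atTop (𝓝 a)) :
    Tendsto (fun n => x n / ρ ^ n) atTop (𝓝 (a / (ρ - k))) := by
  have hρ : 0 < ρ := hk.trans_lt hkρ
  have h := tendsto_of_affine_rec (x := fun n => x n / ρ ^ n) (div_nonneg hk hρ.le)
    ((div_lt_one hρ).2 hkρ) (fun n => ?_) (hy.div_const ρ)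
  · convert h using 2
    field_simp [(sub_pos.2 hkρ).ne']
  · rw [hx, pow_succ]; field_simp

theorem Filter.Tendsto.div_of_common_scale {α : Type*} {l : Filter α} {x y s : α → ℝ}
    {a b : ℝ} (hx : Tendsto (fun n => x n / s n) l (𝓝 a))
    (hy : Tendsto (fun n => y n / s n) l (𝓝 b))
    (hb : b ≠ 0) (hs : ∀ n, s n ≠ 0) : Tendsto (fun n => x n / y n) l (𝓝 (a / b)) :=
  (hx.div hy hb).congr fun n => div_div_div_cancel_right₀ (hs n) _ _

namespace Pillar

def evenThrees (n : ℕ) : ℕ := parityCount 3 true (P (n + 1))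
def oddThrees (n : ℕ) : ℕ := parityCount 3 false (P (n + 1))
def evenOnes (n : ℕ) : ℕ := parityCount 1 true (P (n + 1))
def oddOnes (n : ℕ) : ℕ := parityCount 1 false (P (n + 1))

theorem evenThrees_succ (n : ℕ) : evenThrees (n + 1) = evenOnes n + 2 * evenThrees n :=
  (parityCount_G_three (P_subset_one_three (n + 1))).1

theorem oddThrees_succ (n : ℕ) : oddThrees (n + 1) = evenThrees n :=
  (parityCount_G_three (P_subset_one_three (n + 1))).2.1

theorem evenOnes_succ (n : ℕ) : evenOnes (n + 1) = oddThrees n :=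
  (parityCount_G_three (P_subset_one_three (n + 1))).2.2.1

theorem oddOnes_succ (n : ℕ) : oddOnes (n + 1) = oddOnes n + 2 * oddThrees n :=
  (parityCount_G_three (P_subset_one_three (n + 1))).2.2.2

theorem evenThrees_add_three (n : ℕ) :
    evenThrees (n + 3) = 2 * evenThrees (n + 2) + evenThrees n := by
  rw [evenThrees_succ, evenOnes_succ, oddThrees_succ, add_comm]

theorem length_P_succ (n : ℕ) :
    (P (n + 1)).length = evenThrees n + oddThrees n + evenOnes n + oddOnes n := by
  rw [length_eq_count_one_add_count_three (P_subset_one_three _), count_eq_parityCount_add 1 true,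
    count_eq_parityCount_add 3 true]
  simp only [evenThrees, oddThrees, evenOnes, oddOnes, Bool.not_true]
  ring

theorem count_one_P_succ (n : ℕ) : (P (n + 1)).count 1 = evenOnes n + oddOnes n :=
  count_eq_parityCount_add 1 true _

end Pillar

theorem length_B_add_two (n : ℕ) :
    (B (n + 2)).length = 2 * (B (n + 1)).length + (P (n + 1)).length := by
  simp only [B, List.length_append]; ring

theorem count_B_add_two (v n : ℕ) :
    (B (n + 2)).count v = 2 * (B (n + 1)).count v + (P (n + 1)).count v := by
  simp only [B, List.count_append]; ring

theorem exists_root_two_lt : ∃ ρ : ℝ, 2 < ρ ∧ ρ ^ 3 = 2 * ρ ^ 2 + 1 := by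
  obtain ⟨ρ, hρ, hroot⟩ := intermediate_value_Ioo (by norm_num : (2 : ℝ) ≤ 3)
    (f := fun t => t ^ 3 - 2 * t ^ 2 - 1) (by fun_prop)
    (by norm_num : (0 : ℝ) ∈ Set.Ioo (2 ^ 3 - 2 * 2 ^ 2 - 1) (3 ^ 3 - 2 * 3 ^ 2 - 1))
  exact ⟨ρ, hρ.1, by linarith [hroot]⟩

theorem exists_tendsto_div_pow_of_rec {u : ℕ → ℝ} {ρ M : ℝ} (hρ2 : 2 < ρ)
    (hρ : ρ ^ 3 = 2 * ρ ^ 2 + 1)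
    (hu : ∀ n, u (n + 3) = 2 * u (n + 2) + u n)
    (h0 : |u 1 - ρ * u 0| ≤ M) (h1 : |u 2 - ρ * u 1| ≤ M) :
    ∃ a, Tendsto (fun n => u n / ρ ^ n) atTop (𝓝 a) ∧ |u 0 - a| ≤ M / (ρ - 1) := by
  -- `x ^ 3 - 2 x ^ 2 - 1 = (x - ρ) (x ^ 2 + (ρ - 2) x + ρ (ρ - 2))`, and the defect
  -- `u (n + 1) - ρ u n` follows the recurrence of the quadratic factor, whose coefficients
  -- have absolute values summing to `(ρ - 2) (ρ + 1) = (ρ + 1) / ρ ^ 2 ≤ 1`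
  have hpq : |2 - ρ| + |2 * ρ - ρ ^ 2| ≤ 1 := by
    rw [abs_of_neg (by linarith), abs_of_neg (by nlinarith)]
    nlinarith
  refine exists_tendsto_div_pow_of_abs_sub_mul_le (by linarith)
    (abs_le_of_two_step_rec hpq (fun n => ?_) h0 h1)
  rw [hu]
  linear_combination (-u n) * hρ

namespace Pillar

variable {ρ : ℝ} (hρ2 : 2 < ρ) (hρ : ρ ^ 3 = 2 * ρ ^ 2 + 1)
include hρ2 hρ

theorem exists_tendsto_evenThrees_div_pow :
    ∃ c, 0 < c ∧ Tendsto (fun n => (evenThrees n : ℝ) / ρ ^ n) atTop (𝓝 c) := by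
  have hρ3 : ρ < 9 / 4 := by nlinarith
  obtain ⟨h0, h1, h2⟩ : evenThrees 0 = 1 ∧ evenThrees 1 = 2 ∧ evenThrees 2 = 4 := by decide
  obtain ⟨c, hc, hdist⟩ := exists_tendsto_div_pow_of_rec hρ2 hρ (M := 2 * (ρ - 2))
    (u := fun n => (evenThrees n : ℝ)) (fun n => by exact_mod_cast evenThrees_add_three n)
    (by norm_num [h0, h1, abs_le]; constructor <;> linarith)
    (by norm_num [h1, h2, abs_le]; constructor <;> linarith)
  refine ⟨c, ?_, hc⟩
  have hlt : 2 * (ρ - 2) / (ρ - 1) < 1 := by rw [div_lt_one (by linarith)]; linarith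
  rw [h0, Nat.cast_one] at hdist
  linarith [le_abs_self (1 - c)]

theorem exists_tendsto_count_length_div_pow :
    ∃ o m, 0 < m ∧ Tendsto (fun n => ((P (n + 1)).count 1 : ℝ) / ρ ^ n) atTop (𝓝 o) ∧
      Tendsto (fun n => ((P (n + 1)).length : ℝ) / ρ ^ n) atTop (𝓝 m) := by
  obtain ⟨c, hc, hE3⟩ := exists_tendsto_evenThrees_div_pow hρ2 hρ
  have hO3 := tendsto_div_pow_of_affine_rec le_rfl (by linarith) (x := fun n => (oddThrees n : ℝ))
    (fun n => by simp [oddThrees_succ]) hE3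
  rw [sub_zero] at hO3
  have hE1 := tendsto_div_pow_of_affine_rec le_rfl (by linarith) (x := fun n => (evenOnes n : ℝ))
    (fun n => by simp [evenOnes_succ]) hO3
  rw [sub_zero] at hE1
  have hO1 := tendsto_div_pow_of_affine_rec (k := 1) (ρ := ρ) zero_le_one (by linarith)
    (x := fun n => (oddOnes n : ℝ)) (y := fun n => 2 * (oddThrees n : ℝ))
    (fun n => by simp [oddOnes_succ]) (by simpa only [mul_div_assoc] using hO3.const_mul 2)
  refine ⟨_, _, ?_, (hE1.add hO1).congr fun n => ?_,
    (((hE3.add hO3).add hE1).add hO1).congr fun n => ?_⟩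
  · have : 0 < ρ - 1 := by linarith
    positivity
  · rw [count_one_P_succ]; push_cast; ring
  · rw [length_P_succ]; push_cast; ring

end Pillar

theorem pillar_density_limit_general (d : ℝ)
    (hlim : Filter.Tendsto
      (fun n => ((B n).count 1 : ℝ) / ((B n).length : ℝ)) Filter.atTop (nhds d)) :
    Filter.Tendsto
      (fun n => ((P n).count 1 : ℝ) / ((P n).length : ℝ)) Filter.atTop (nhds d) := by
  obtain ⟨ρ, hρ2, hρ⟩ := exists_root_two_lt
  obtain ⟨o, m, hm, ho, hm'⟩ := Pillar.exists_tendsto_count_length_div_pow hρ2 hρ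
  have hρ0 : ∀ n, ρ ^ n ≠ 0 := fun n => pow_ne_zero n (by linarith)
  have hcount := tendsto_div_pow_of_affine_rec zero_le_two hρ2
    (x := fun n => ((B (n + 1)).count 1 : ℝ)) (fun n => by simp [count_B_add_two]) ho
  have hlength := tendsto_div_pow_of_affine_rec zero_le_two hρ2
    (x := fun n => ((B (n + 1)).length : ℝ)) (fun n => by simp [length_B_add_two]) hm'
  have hblock := hcount.div_of_common_scale hlength (div_pos hm (sub_pos.2 hρ2)).ne' hρ0
  rw [div_div_div_cancel_right₀ (sub_pos.2 hρ2).ne'] at hblock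
  obtain rfl := tendsto_nhds_unique ((tendsto_add_atTop_iff_nat 1).2 hlim) hblock
  exact (tendsto_add_atTop_iff_nat 1).1 (ho.div_of_common_scale hm' hm.ne' hρ0)

/-- If the block densities `d n = c n / L n` converge to `d ≠ 1/2`, then the pillar
densities `δ n = o n / m n` also converge, with the same limit `d`. -/
theorem pillar_density_limit (d : ℝ)
    (hlim : Filter.Tendsto
      (fun n => ((B n).count 1 : ℝ) / ((B n).length : ℝ)) Filter.atTop (nhds d))
    (hd : d ≠ 1 / 2) :
    Filter.Tendsto
      (fun n => ((P n).count 1 : ℝ) / ((P n).length : ℝ)) Filter.atTop (nhds d) :=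
  pillar_density_limit_general d hlim
end
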